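/- arXiv:1403.3713 — 3 statements merged into one kernel-verified Lean document; each statement's English description precedes it below -/
import Mathlib

section
/- Let ω : ℝ² → ℝ be continuous with compact support and radial (i.e., ω(x) depends only on |x|), and let f : ℝ² → ℝ be differentiable and radial. Then for every x ∈ ℝ², ((K∗ω)(x)) · ∇f(x) = 0, where K(x) = (−x₂/|x|², x₁/|x|²) is the Biot–Savart kernel and K∗ω denotes componentwise convolution. -/
/-!
Let `R` be the reflection in a line through `x` (any line if `x = 0`). It fixes `x` and preserves
the radial functions `ω` and `f`, while `K`, a quarter-turn rotation divided by `|w|²`,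
anticommutes with it: `K (R w) = -R (K w)`. Changing variables `y ↦ R y` in the convolution gives
`R u = -u` for `u = (K∗ω)(x)`, whereas `R (∇f x) = ∇f x`. As `R` is an isometry,
`⟪u, ∇f x⟫ = ⟪R u, R (∇f x)⟫ = -⟪u, ∇f x⟫`.
-/

open MeasureTheory RealInnerProductSpace

noncomputable section

/-- The plane `ℝ²` as a Euclidean (inner product) space. -/
abbrev E2 : Type := EuclideanSpace ℝ (Fin 2)

/-- The vector `(a, b) ∈ ℝ²`. -/
def vec2 (a b : ℝ) : E2 := (WithLp.equiv 2 (Fin 2 → ℝ)).symm ![a, b]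

/-- The two-dimensional Biot–Savart kernel `K(x) = (-x₂/|x|², x₁/|x|²)`
(with the convention `K(0) = 0`, coming from division by zero). -/
def biotSavartK (x : E2) : E2 := vec2 (-(x 1) / ‖x‖ ^ 2) (x 0 / ‖x‖ ^ 2)

section Invariance

variable {E : Type*} [NormedAddCommGroup E] [InnerProductSpace ℝ E]

theorem LinearIsometryEquiv.map_gradient_eq_self [CompleteSpace E] {f : E → ℝ} {x : E}
    (R : E ≃ₗᵢ[ℝ] E) (hRx : R x = x) (hf : ∀ y, f (R y) = f y) :
    R (gradient f x) = gradient f x := by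
  have hfderiv : ∀ v, fderiv ℝ f x (R v) = fderiv ℝ f x v := fun v => by
    have h := R.toContinuousLinearEquiv.comp_right_fderiv (f := f) (x := x)
    rw [show f ∘ R.toContinuousLinearEquiv = f from funext hf,
      show R.toContinuousLinearEquiv x = x from hRx] at h
    exact (DFunLike.congr_fun h v).symm
  refine ext_inner_right ℝ fun w => ?_
  calc ⟪R (gradient f x), w⟫
      = ⟪gradient f x, R.symm w⟫ := by
        rw [← R.inner_map_map (gradient f x), R.apply_symm_apply]
    _ = fderiv ℝ f x (R.symm w) := InnerProductSpace.toDual_symm_apply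
    _ = fderiv ℝ f x w := by simpa using (hfderiv (R.symm w)).symm
    _ = ⟪gradient f x, w⟫ := InnerProductSpace.toDual_symm_apply.symm

theorem LinearIsometryEquiv.map_integral_smul_sub_eq_neg [FiniteDimensional ℝ E]
    [MeasurableSpace E] [BorelSpace E] {ω : E → ℝ} {K : E → E} {x : E}
    (R : E ≃ₗᵢ[ℝ] E) (hRx : R x = x) (hω : ∀ y, ω (R y) = ω y)
    (hK : ∀ w, K (R w) = -R (K w)) :
    R (∫ y, ω y • K (x - y)) = -∫ y, ω y • K (x - y) := by
  calc R (∫ y, ω y • K (x - y))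
      = ∫ y, R (ω y • K (x - y)) := (R.toContinuousLinearEquiv.integral_comp_comm _).symm
    _ = -∫ y, ω (R y) • K (x - R y) := by
        rw [← integral_neg]
        congr 1 with y
        rw [hω, ← hRx, ← map_sub, hK, hRx, map_smul, smul_neg, neg_neg]
    _ = -∫ y, ω y • K (x - y) := by
        rw [integral_comp R fun y => ω y • K (x - y)]

end Invariance

def rotQuarter (x : E2) : E2 := vec2 (-(x 1)) (x 0)

theorem biotSavartK_eq_smul_rotQuarter (w : E2) :
    biotSavartK w = (‖w‖ ^ 2)⁻¹ • rotQuarter w := by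
  ext i; fin_cases i <;> simp [biotSavartK, rotQuarter, vec2, div_eq_inv_mul]

theorem rotQuarter_reflection {a : E2} (ha : a ≠ 0) (v : E2) :
    rotQuarter ((ℝ ∙ a).reflection v) = -(ℝ ∙ a).reflection (rotQuarter v) := by
  have hna : ‖a‖ ^ 2 = a 0 ^ 2 + a 1 ^ 2 := by
    simp [EuclideanSpace.norm_sq_eq, Fin.sum_univ_two]
  have hpos : a 0 ^ 2 + a 1 ^ 2 ≠ 0 := by rw [← hna]; positivity
  simp only [Submodule.reflection_apply, Submodule.starProjection_singleton]
  ext i; fin_cases i <;>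
    simp [rotQuarter, vec2, hna, PiLp.inner_apply, Fin.sum_univ_two] <;> field_simp <;> ring

theorem exists_reflection_fixing_biotSavartK (x : E2) :
    ∃ R : E2 ≃ₗᵢ[ℝ] E2, R x = x ∧ ∀ w, biotSavartK (R w) = -R (biotSavartK w) := by
  obtain ⟨a, ha, hxa⟩ : ∃ a : E2, a ≠ 0 ∧ x ∈ ℝ ∙ a := by
    by_cases hx : x = 0
    · exact ⟨EuclideanSpace.single 0 1, by simp, by simp [hx]⟩
    · exact ⟨x, hx, Submodule.mem_span_singleton_self x⟩
  refine ⟨(ℝ ∙ a).reflection, Submodule.reflection_mem_subspace_eq_self hxa, fun w => ?_⟩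
  rw [biotSavartK_eq_smul_rotQuarter, biotSavartK_eq_smul_rotQuarter, LinearIsometryEquiv.norm_map,
    rotQuarter_reflection ha, map_smul, smul_neg]

theorem biotSavart_radial_inner_gradient_radial_eq_zero_general
    (ω : E2 → ℝ) (f : E2 → ℝ)
    (hω_rad : ∀ x y : E2, ‖x‖ = ‖y‖ → ω x = ω y)
    (hf_rad : ∀ x y : E2, ‖x‖ = ‖y‖ → f x = f y) :
    ∀ x : E2, ⟪(∫ y : E2, ω y • biotSavartK (x - y)), gradient f x⟫ = 0 := by
  intro x
  obtain ⟨R, hRx, hRK⟩ := exists_reflection_fixing_biotSavartK x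
  have hu := R.map_integral_smul_sub_eq_neg hRx (fun y => hω_rad _ _ (R.norm_map y)) hRK
  have hg := R.map_gradient_eq_self hRx (fun y => hf_rad _ _ (R.norm_map y))
  have h := R.inner_map_map (∫ y : E2, ω y • biotSavartK (x - y)) (gradient f x)
  rw [hu, hg, inner_neg_left] at h
  linarith

/-- **Lemma 2.1.** If `ω : ℝ² → ℝ` is continuous, compactly supported and radial,
and `f : ℝ² → ℝ` is differentiable and radial, then `(K∗ω)(x) · ∇f(x) = 0` for every `x`. -/
theorem biotSavart_radial_inner_gradient_radial_eq_zero
    (ω : E2 → ℝ) (f : E2 → ℝ)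
    (hω_cont : Continuous ω) (hω_supp : HasCompactSupport ω)
    (hω_rad : ∀ x y : E2, ‖x‖ = ‖y‖ → ω x = ω y)
    (hf_diff : Differentiable ℝ f)
    (hf_rad : ∀ x y : E2, ‖x‖ = ‖y‖ → f x = f y) :
    ∀ x : E2, ⟪(∫ y : E2, ω y • biotSavartK (x - y)), gradient f x⟫ = 0 :=
  biotSavart_radial_inner_gradient_radial_eq_zero_general ω f hω_rad hf_rad

end
end

section
/- Let ω : ℝ² → ℝ be continuous with compact support and radial (i.e., ω(x) depends only on |x|). Then for every x ∈ ℝ², the vector (K∗ω)(x) is orthogonal to x, i.e., ((K∗ω)(x)) · x = 0, where K(x) = (−x₂/|x|², x₁/|x|²). -/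
open MeasureTheory RealInnerProductSpace

noncomputable section

/-!
Let `R` be the reflection across the line `ℝ x`. It preserves Lebesgue measure and norms, so
`ω ∘ R = ω`; it fixes `x`, so `x - R y = R (x - y)`; and, being orientation reversing, it flips
the sign of the cross product `⟪K z, x⟫ = (z₁ x₂ - z₂ x₁) / |z|²`. Hence `y ↦ ⟪x, ω y K (x - y)⟫`
is odd under `R` and integrates to `0`.
-/

theorem MeasureTheory.MeasurePreserving.integral_eq_zero_of_comp_eq_neg {α F : Type*}
    [MeasurableSpace α] {μ : Measure α} [NormedAddCommGroup F] [NormedSpace ℝ F]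
    {e : α → α} (he : MeasurePreserving e μ μ) (he' : MeasurableEmbedding e) {f : α → F}
    (hf : ∀ x, f (e x) = -f x) : ∫ x, f x ∂μ = 0 := by
  have : IsAddTorsionFree F := .of_isTorsionFree ℝ F
  simp_rw [← self_eq_neg, ← integral_neg, ← hf, he.integral_comp he']

lemma inner_biotSavartK (z x : E2) :
    ⟪biotSavartK z, x⟫ = (-(z 1) * x 0 + z 0 * x 1) / ‖z‖ ^ 2 := by
  simp only [biotSavartK, vec2, PiLp.inner_apply, RCLike.inner_apply, starRingEnd_apply,
    star_trivial, Fin.sum_univ_two, WithLp.equiv_symm_apply, Matrix.cons_val_zero,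
    Matrix.cons_val_one]
  ring

lemma inner_biotSavartK_reflection_span_singleton (x z : E2) :
    ⟪biotSavartK ((ℝ ∙ x).reflection z), x⟫ = -⟪biotSavartK z, x⟫ := by
  have hcoord : ∀ i, (ℝ ∙ x).reflection z i = 2 * (⟪x, z⟫ / ‖x‖ ^ 2 * x i) - z i := by
    intro i
    simp [Submodule.reflection_singleton_apply]
  simp only [inner_biotSavartK, LinearIsometryEquiv.norm_map, hcoord]
  ring

lemma reflection_span_singleton_sub {𝕜 E : Type*} [RCLike 𝕜] [NormedAddCommGroup E]
    [InnerProductSpace 𝕜 E] (x y : E) :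
    (𝕜 ∙ x).reflection (x - y) = x - (𝕜 ∙ x).reflection y := by
  rw [map_sub, (Submodule.reflection_eq_self_iff x).mpr (Submodule.mem_span_singleton_self x)]

theorem biotSavart_radial_inner_self_eq_zero_general
    (ω : E2 → ℝ)
    (hω_rad : ∀ x y : E2, ‖x‖ = ‖y‖ → ω x = ω y) :
    ∀ x : E2, ⟪(∫ y : E2, ω y • biotSavartK (x - y)), x⟫ = 0 := by
  intro x
  by_cases hint : Integrable fun y => ω y • biotSavartK (x - y)
  swap
  · -- junk value: the Bochner integral of a non-integrable function is `0`
    simp [integral_undef hint]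
  set R := (ℝ ∙ x).reflection
  rw [real_inner_comm, ← integral_inner hint]
  refine R.measurePreserving.integral_eq_zero_of_comp_eq_neg
    R.toHomeomorph.measurableEmbedding fun y => ?_
  rw [← reflection_span_singleton_sub, real_inner_smul_right, real_inner_smul_right,
    real_inner_comm, inner_biotSavartK_reflection_span_singleton, real_inner_comm,
    hω_rad _ _ (R.norm_map y)]
  ring

/-- If `ω : ℝ² → ℝ` is continuous, compactly supported and radial, then the
Biot–Savart velocity `(K∗ω)(x)` is orthogonal to `x` for every `x ∈ ℝ²`. -/
theorem biotSavart_radial_inner_self_eq_zero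
    (ω : E2 → ℝ)
    (hω_cont : Continuous ω) (hω_supp : HasCompactSupport ω)
    (hω_rad : ∀ x y : E2, ‖x‖ = ‖y‖ → ω x = ω y) :
    ∀ x : E2, ⟪(∫ y : E2, ω y • biotSavartK (x - y)), x⟫ = 0 :=
  biotSavart_radial_inner_self_eq_zero_general ω hω_rad

end
end

section
/- Let g : ℝ² → ℝ² be measurable with g ∈ L²(ℝ²; ℝ²), and suppose g is (positively) homogeneous of degree −1 in the sense that for every l > 0, g(x) = l · g(l x) for almost every x ∈ ℝ². Then g = 0 almost everywhere. -/
/-!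
Homogeneity makes the density `‖g‖²` homogeneous of degree `-2 = -dim ℝ²`, so the finite measure
`‖g x‖² dx` gives every ball centred at the origin the same mass. Letting the radius grow, that
mass is the total mass; letting it shrink, it is the mass of `{0}`, which is zero.
-/

open MeasureTheory

noncomputable section

open scoped ENNReal Pointwise
open Metric Module Set

theorem MeasureTheory.Measure.eq_zero_of_measure_ball_eq {X : Type*} [MetricSpace X]
    [MeasurableSpace X] [OpensMeasurableSpace X] {ν : Measure X} {x : X} (hx : ν {x} = 0)
    (hfin : ν (ball x 1) ≠ ∞) (hball : ∀ r, 0 < r → ν (ball x r) = ν (ball x 1)) : ν = 0 := by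
  have h_center : ν {x} = ν (ball x 1) := by
    have h := tendsto_measure_biInter_gt (μ := ν) (s := ball x) (a := (0 : ℝ))
      (fun r _ ↦ measurableSet_ball.nullMeasurableSet)
      (fun _ _ _ hrs ↦ ball_subset_ball hrs) ⟨1, one_pos, hfin⟩
    rw [biInter_gt_ball, closedBall_zero] at h
    refine tendsto_nhds_unique h (tendsto_const_nhds.congr' ?_)
    filter_upwards [self_mem_nhdsWithin] with r hr using (hball r hr).symm
  have h_univ : ν univ = ν (ball x 1) := by
    rw [← iUnion_ball_nat_succ x, Monotone.measure_iUnion]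
    · simp_rw [fun n : ℕ ↦ hball (n + 1) n.cast_add_one_pos, iSup_const]
    · exact fun m n hmn ↦ ball_subset_ball (by exact_mod_cast Nat.add_le_add_right hmn 1)
  rw [← Measure.measure_univ_eq_zero, h_univ, ← h_center, hx]

section Scaling

variable {E : Type*} [NormedAddCommGroup E] [NormedSpace ℝ E] [MeasurableSpace E] [BorelSpace E]
  [FiniteDimensional ℝ E] {μ : Measure E} [μ.IsAddHaarMeasure] {f : E → ℝ≥0∞}

theorem setLIntegral_smul_set_of_homogeneous {l : ℝ} (hl : 0 < l)
    (hf : ∀ᵐ x ∂μ, f x = ENNReal.ofReal (l ^ finrank ℝ E) * f (l • x)) (s : Set E) :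
    ∫⁻ x in l • s, f x ∂μ = ∫⁻ x in s, f x ∂μ := by
  have h_map := Measure.map_addHaar_smul μ hl.ne'
  have h_pres : MeasurePreserving (l • · : E → E) μ (Measure.map (l • ·) μ) :=
    ⟨measurable_const_smul l, rfl⟩
  have h_cov := h_pres.setLIntegral_comp_emb (measurableEmbedding_const_smul₀ hl.ne') f s
  rw [h_map, image_smul, Measure.restrict_smul, lintegral_smul_measure] at h_cov
  calc ∫⁻ x in l • s, f x ∂μ
      = ENNReal.ofReal (l ^ finrank ℝ E) * ENNReal.ofReal |(l ^ finrank ℝ E)⁻¹| *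
          ∫⁻ x in l • s, f x ∂μ := by
        rw [← ENNReal.ofReal_mul (by positivity), abs_of_pos (by positivity),
          mul_inv_cancel₀ (by positivity), ENNReal.ofReal_one, one_mul]
    _ = ∫⁻ x in s, ENNReal.ofReal (l ^ finrank ℝ E) * f (l • x) ∂μ := by
        rw [lintegral_const_mul' _ _ ENNReal.ofReal_ne_top, h_cov, smul_eq_mul, mul_assoc]
    _ = ∫⁻ x in s, f x ∂μ := lintegral_congr_ae (ae_restrict_of_ae (hf.mono fun x hx ↦ hx.symm))

theorem ae_eq_zero_of_homogeneous_of_lintegral_ne_top [Nontrivial E] (hfm : AEMeasurable f μ)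
    (hfi : ∫⁻ x, f x ∂μ ≠ ∞)
    (hf : ∀ l : ℝ, 0 < l → ∀ᵐ x ∂μ, f x = ENNReal.ofReal (l ^ finrank ℝ E) * f (l • x)) :
    f =ᵐ[μ] 0 := by
  have : IsFiniteMeasure (μ.withDensity f) := isFiniteMeasure_withDensity hfi
  rw [← withDensity_eq_zero_iff hfm]
  refine Measure.eq_zero_of_measure_ball_eq (x := 0)
    (withDensity_absolutelyContinuous μ f (measure_singleton 0)) (measure_ne_top _ _)
    fun r hr ↦ ?_
  rw [← smul_unitBall_of_pos hr, withDensity_apply', withDensity_apply',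
    setLIntegral_smul_set_of_homogeneous hr (hf r hr)]

end Scaling

/-- A vector field `g ∈ L²(ℝ²; ℝ²)` which is (positively) homogeneous of
degree `-1`, in the sense that for every `l > 0`, `g(x) = l • g(l x)` for a.e. `x`, vanishes
almost everywhere. -/
theorem homogeneous_deg_neg_one_L2_eq_zero (g : E2 → E2)
    (hg : MemLp g 2 volume)
    (hhom : ∀ l : ℝ, 0 < l → ∀ᵐ x : E2 ∂volume, g x = l • g (l • x)) :
    ∀ᵐ x : E2 ∂volume, g x = 0 := by
  have h_fin : ∫⁻ x, ‖g x‖ₑ ^ (2 : ℝ) ≠ ∞ := by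
    simpa using (lintegral_rpow_enorm_lt_top_of_eLpNorm_lt_top two_ne_zero
      ENNReal.ofNat_ne_top hg.eLpNorm_lt_top).ne
  have h_hom : ∀ l : ℝ, 0 < l → ∀ᵐ x : E2, ‖g x‖ₑ ^ (2 : ℝ) =
      ENNReal.ofReal (l ^ finrank ℝ E2) * ‖g (l • x)‖ₑ ^ (2 : ℝ) := by
    intro l hl
    filter_upwards [hhom l hl] with x hx
    rw [hx, enorm_smul, ENNReal.mul_rpow_of_nonneg _ _ zero_le_two, finrank_euclideanSpace_fin,
      Real.enorm_eq_ofReal hl.le, ENNReal.ofReal_rpow_of_nonneg hl.le zero_le_two]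
    norm_cast
  filter_upwards [ae_eq_zero_of_homogeneous_of_lintegral_ne_top
    (hg.1.enorm.pow_const 2) h_fin h_hom] with x hx
  simpa using hx
end
end
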